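/- arXiv:2505.00075 — 2 statements merged into one kernel-verified Lean document; each statement's English description precedes it below -/
import Mathlib

section
/- Identify ℝ³ with the pure imaginary quaternions. Let a₀,…,a_N be distinct pure imaginary quaternions, λ₀,…,λ_N > 0, μ > 0, and let ι̃ : ℝ³ ∖ {a₀,…,a_N} → ℝ³ be the map sending x to the imaginary part of Ψ(μ)(x)·conj(ζ(x)), regarded as a vector in ℝ³, where ζ(x) = Σᵢ λᵢ²(x − aᵢ)/‖x − aᵢ‖² and Ψ(μ)(x) = Σᵢ,ⱼ λᵢ²λⱼ² (x − aᵢ + μ)·conj(x − aⱼ + μ)·(x − aⱼ)/(‖x − aᵢ + μ‖²‖x − aⱼ + μ‖²‖x − aⱼ‖²). Suppose x* satisfies ζ(x*) = 0, and let Hf(x*) be the Hessian at x* of f(x) = Σᵢ λᵢ² log‖x − aᵢ‖ and Ξ(μ)(x) = Σᵢ,ⱼ μλᵢ²λⱼ²(aⱼ − aᵢ)·(x − aⱼ)/(‖x − aᵢ + μ‖²‖x − aⱼ + μ‖²‖x − aⱼ‖²). Then the determinant of the total derivative of ι̃ at x* equals −det(Hf(x*)) · Re(Ξ(μ)(x*))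 · (Re(Ξ(μ)(x*))² + ‖Im(Ξ(μ)(x*))‖²). -/
/-- The pure imaginary quaternion corresponding to a vector in `ℝ³`. -/
def quatOfVec (y : Fin 3 → ℝ) : Quaternion ℝ := ⟨0, y 0, y 1, y 2⟩

/-- The vector in `ℝ³` formed by the imaginary part of a quaternion. -/
def imVec (q : Quaternion ℝ) : Fin 3 → ℝ := ![q.imI, q.imJ, q.imK]

/-- The JNR function `ζ(x) = Σᵢ λᵢ² (x − aᵢ)/‖x − aᵢ‖²`, quaternion-valued. -/
noncomputable def jnrZeta (N : ℕ) (a : Fin (N + 1) → Quaternion ℝ)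
    (lam : Fin (N + 1) → ℝ) (x : Quaternion ℝ) : Quaternion ℝ :=
  ∑ i, ((lam i) ^ 2 / ‖x - a i‖ ^ 2) • (x - a i)

/-- `ζ` as a map `ℝ³ → ℝ³` on pure imaginary quaternions. -/
noncomputable def jnrZetaVec (N : ℕ) (a : Fin (N + 1) → Quaternion ℝ)
    (lam : Fin (N + 1) → ℝ) (y : Fin 3 → ℝ) : Fin 3 → ℝ :=
  imVec (jnrZeta N a lam (quatOfVec y))

/-- `Ψ(μ)(x) = Σᵢⱼ λᵢ²λⱼ² (x − aᵢ + μ)·conj(x − aⱼ + μ)·(x − aⱼ)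
/(‖x − aᵢ + μ‖²‖x − aⱼ + μ‖²‖x − aⱼ‖²)`, with quaternion products. -/
noncomputable def jnrPsi (N : ℕ) (a : Fin (N + 1) → Quaternion ℝ)
    (lam : Fin (N + 1) → ℝ) (μ : ℝ) (x : Quaternion ℝ) : Quaternion ℝ :=
  ∑ i, ∑ j,
    ((lam i) ^ 2 * (lam j) ^ 2 /
        (‖x - a i + (μ : Quaternion ℝ)‖ ^ 2 * ‖x - a j + (μ : Quaternion ℝ)‖ ^ 2 *
          ‖x - a j‖ ^ 2)) •
      ((x - a i + (μ : Quaternion ℝ)) * star (x - a j + (μ : Quaternion ℝ)) * (x - a j))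

/-- `Ξ(μ)(x) = Σᵢⱼ μλᵢ²λⱼ² (aⱼ − aᵢ)·(x − aⱼ)/(‖x − aᵢ + μ‖²‖x − aⱼ + μ‖²‖x − aⱼ‖²)`. -/
noncomputable def jnrXi (N : ℕ) (a : Fin (N + 1) → Quaternion ℝ)
    (lam : Fin (N + 1) → ℝ) (μ : ℝ) (x : Quaternion ℝ) : Quaternion ℝ :=
  ∑ i, ∑ j,
    (μ * (lam i) ^ 2 * (lam j) ^ 2 /
        (‖x - a i + (μ : Quaternion ℝ)‖ ^ 2 * ‖x - a j + (μ : Quaternion ℝ)‖ ^ 2 *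
          ‖x - a j‖ ^ 2)) •
      ((a j - a i) * (x - a j))

/-- `ι̃ : ℝ³ → ℝ³`, `x ↦ Im(Ψ(μ)(x)·conj(ζ(x)))` regarded as a vector in `ℝ³`. -/
noncomputable def jnrIota (N : ℕ) (a : Fin (N + 1) → Quaternion ℝ)
    (lam : Fin (N + 1) → ℝ) (μ : ℝ) (y : Fin 3 → ℝ) : Fin 3 → ℝ :=
  imVec (jnrPsi N a lam μ (quatOfVec y) * star (jnrZeta N a lam (quatOfVec y)))


/-!
At a zero `x⁎` of `ζ` the product rule drops the term involving the derivative of `Ψ(μ)`, so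
`dι̃(x⁎) v = Im(Ψ(μ)(x⁎) · conj(dζ(x⁎) v))`. As `dζ` takes pure imaginary values, `conj` acts on
them as `-1`, and `v ↦ Im(q · v)` on `ℝ³` has determinant `Re q · (Re q² + ‖Im q‖²)`; hence
`det dι̃(x⁎) = -Re q · (Re q² + ‖Im q‖²) · det Hf(x⁎)` with `q = Ψ(μ)(x⁎)`.

It remains to see `Ψ(μ)(x⁎) = Ξ(μ)(x⁎)`. For pure imaginary `u = x - aⱼ`, `w = x - aᵢ`,
`(w + μ) · conj(u + μ) · u = ‖u + μ‖² u + μ (w - u) u + ‖u‖² (w - u)`, and `w - u = aⱼ - aᵢ`.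
Summed with the weights of `Ψ`, the first term gives `(Σᵢ λᵢ²/‖x - aᵢ + μ‖²) · ζ(x⁎) = 0`, the
second gives `Ξ(μ)(x⁎)`, and the third is a symmetric weight times `aⱼ - aᵢ`, which sums to `0`.
-/

open Quaternion

theorem Finset.sum_sum_mul_smul_sub_eq_zero {ι R M : Type*} [CommRing R] [AddCommGroup M]
    [Module R M] (s : Finset ι) (c : ι → R) (v : ι → M) :
    ∑ i ∈ s, ∑ j ∈ s, (c i * c j) • (v j - v i) = 0 := by
  simp_rw [smul_sub, Finset.sum_sub_distrib]
  rw [sub_eq_zero, Finset.sum_comm]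
  simp_rw [mul_comm]

theorem DifferentiableAt.hasFDerivAt_mul_of_eq_zero {𝕜 E 𝔸 : Type*} [NontriviallyNormedField 𝕜]
    [NormedAddCommGroup E] [NormedSpace 𝕜 E] [NormedRing 𝔸] [NormedAlgebra 𝕜 𝔸]
    {f g : E → 𝔸} {g' : E →L[𝕜] 𝔸} {x : E} (hf : DifferentiableAt 𝕜 f x)
    (hg : HasFDerivAt g g' x) (hgx : g x = 0) :
    HasFDerivAt (fun y => f y * g y) (f x • g') x := by
  refine (hf.hasFDerivAt.mul' hg).congr_fderiv ?_
  ext v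
  simp [hgx]

namespace Quaternion

instance : StarModule ℝ ℍ[ℝ] := ⟨fun r q => by ext <;> simp⟩

theorem re_sum {ι : Type*} (s : Finset ι) (f : ι → ℍ[ℝ]) :
    (∑ i ∈ s, f i).re = ∑ i ∈ s, (f i).re :=
  map_sum (QuaternionAlgebra.reₗ (-1) 0 (-1)) f s

theorem sq_norm (q : ℍ[ℝ]) : ‖q‖ ^ 2 = q.re ^ 2 + q.imI ^ 2 + q.imJ ^ 2 + q.imK ^ 2 := by
  rw [sq, ← normSq_eq_norm_mul_self, normSq_def']

theorem sq_norm_im (q : ℍ[ℝ]) : ‖q.im‖ ^ 2 = q.imI ^ 2 + q.imJ ^ 2 + q.imK ^ 2 := by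
  simp [sq_norm]

theorem sq_norm_add_coe {q : ℍ[ℝ]} (hq : q.re = 0) (r : ℝ) :
    ‖q + r‖ ^ 2 = ‖q‖ ^ 2 + r ^ 2 := by
  simp only [sq_norm, re_add, imI_add, imJ_add, imK_add, re_coe, imI_coe, imJ_coe, imK_coe, hq]
  ring

theorem add_coe_ne_zero {q : ℍ[ℝ]} (hq : q.re = 0) (hq0 : q ≠ 0) (r : ℝ) : q + r ≠ 0 := by
  rw [← norm_ne_zero_iff, ← sq_pos_iff, sq_norm_add_coe hq]
  exact add_pos_of_pos_of_nonneg (pow_pos (norm_pos_iff.2 hq0) 2) (sq_nonneg r)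

theorem add_coe_mul_star_add_coe_mul {u v : ℍ[ℝ]} (hu : u.re = 0) (hv : v.re = 0) (r : ℝ) :
    (v + r) * star (u + r) * u = ‖u + r‖ ^ 2 • u + r • ((v - u) * u) + ‖u‖ ^ 2 • (v - u) := by
  rw [sq_norm_add_coe hu, sq_norm]
  ext <;> simp [hu, hv] <;> ring

end Quaternion

@[simp] theorem re_quatOfVec (y : Fin 3 → ℝ) : (quatOfVec y).re = 0 := rfl

@[simp] theorem imI_quatOfVec (y : Fin 3 → ℝ) : (quatOfVec y).imI = y 0 := rfl

@[simp] theorem imJ_quatOfVec (y : Fin 3 → ℝ) : (quatOfVec y).imJ = y 1 := rfl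

@[simp] theorem imK_quatOfVec (y : Fin 3 → ℝ) : (quatOfVec y).imK = y 2 := rfl

noncomputable def quatOfVecL : (Fin 3 → ℝ) →L[ℝ] ℍ[ℝ] :=
  LinearMap.toContinuousLinearMap
    { toFun := quatOfVec
      map_add' := fun y z => by ext <;> simp
      map_smul' := fun c y => by ext <;> simp }

noncomputable def imVecL : ℍ[ℝ] →L[ℝ] (Fin 3 → ℝ) :=
  LinearMap.toContinuousLinearMap
    { toFun := imVec
      map_add' := fun p q => by ext i; fin_cases i <;> simp [imVec]
      map_smul' := fun c q => by ext i; fin_cases i <;> simp [imVec] }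

@[simp] theorem quatOfVecL_apply (y : Fin 3 → ℝ) : quatOfVecL y = quatOfVec y := rfl

@[simp] theorem imVecL_apply (q : ℍ[ℝ]) : imVecL q = imVec q := rfl

theorem quatOfVec_imVec {q : ℍ[ℝ]} (hq : q.re = 0) : quatOfVec (imVec q) = q := by
  ext <;> simp [imVec, hq]

/-- `v ↦ Im (q · conj v)` on `ℝ³`, using `conj v = -v` for pure imaginary `v`. -/
noncomputable def imMulConjL (q : ℍ[ℝ]) : (Fin 3 → ℝ) →L[ℝ] (Fin 3 → ℝ) :=
  -(imVecL ∘L ContinuousLinearMap.mul ℝ ℍ[ℝ] q ∘L quatOfVecL)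

theorem det_imMulConjL (q : ℍ[ℝ]) :
    LinearMap.det (imMulConjL q : (Fin 3 → ℝ) →ₗ[ℝ] (Fin 3 → ℝ))
      = -(q.re * (q.re ^ 2 + ‖q.im‖ ^ 2)) := by
  rw [← LinearMap.det_toMatrix', Matrix.det_fin_three, sq_norm_im]
  simp [LinearMap.toMatrix'_apply, imMulConjL, imVec]
  ring

section JNR

variable {N : ℕ} {a : Fin (N + 1) → ℍ[ℝ]} {lam : Fin (N + 1) → ℝ} {μ : ℝ} {x : ℍ[ℝ]}

theorem re_jnrZeta (ha_im : ∀ i, (a i).re = 0) (hx : x.re = 0) : (jnrZeta N a lam x).re = 0 := by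
  rw [jnrZeta, re_sum]
  exact Finset.sum_eq_zero fun i _ => by simp [hx, ha_im]

theorem jnrZeta_quatOfVec (ha_im : ∀ i, (a i).re = 0) (y : Fin 3 → ℝ) :
    jnrZeta N a lam (quatOfVec y) = quatOfVec (jnrZetaVec N a lam y) :=
  (quatOfVec_imVec (re_jnrZeta ha_im (re_quatOfVec y))).symm

theorem differentiableAt_jnrZeta (hx : ∀ i, x ≠ a i) :
    DifferentiableAt ℝ (jnrZeta N a lam) x := by
  refine DifferentiableAt.fun_sum fun i _ => ?_
  have hu := (differentiableAt_id (𝕜 := ℝ) (x := x)).sub_const (a i)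
  have hsq := hu.norm_sq ℝ
  have hsq0 : ‖x - a i‖ ^ 2 ≠ 0 := by simpa [sub_eq_zero] using hx i
  simp only [div_eq_mul_inv]
  fun_prop (disch := exact hsq0)

theorem differentiableAt_jnrPsi (hx : ∀ i, x ≠ a i) (hxμ : ∀ i, x - a i + μ ≠ 0) :
    DifferentiableAt ℝ (jnrPsi N a lam μ) x := by
  refine DifferentiableAt.fun_sum fun i _ => DifferentiableAt.fun_sum fun j _ => ?_
  have hu : ∀ k, DifferentiableAt ℝ (fun y => y - a k) x := fun k =>
    differentiableAt_id.sub_const _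
  have hw : ∀ k, DifferentiableAt ℝ (fun y => y - a k + μ) x := fun k => (hu k).add_const _
  have hn : ‖x - a i + μ‖ ^ 2 * ‖x - a j + μ‖ ^ 2 * ‖x - a j‖ ^ 2 ≠ 0 := by
    simp [sub_eq_zero, hx, hxμ]
  have hwi := (hw i).norm_sq ℝ
  have hwj := (hw j).norm_sq ℝ
  have huj := (hu j).norm_sq ℝ
  simp only [div_eq_mul_inv]
  fun_prop (disch := exact hn)

theorem jnrPsi_eq_jnrXi (ha_im : ∀ i, (a i).re = 0) (hx_re : x.re = 0) (hx : ∀ i, x ≠ a i)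
    (hzero : jnrZeta N a lam x = 0) : jnrPsi N a lam μ x = jnrXi N a lam μ x := by
  have hu_re : ∀ i, (x - a i).re = 0 := by simp [hx_re, ha_im]
  have hB : ∀ i, ‖x - a i‖ ≠ 0 := fun i => by simpa [sub_eq_zero] using hx i
  have hA : ∀ i, ‖x - a i + μ‖ ≠ 0 := fun i =>
    norm_ne_zero_iff.2 (add_coe_ne_zero (hu_re i) (sub_ne_zero.2 (hx i)) μ)
  have hterm : ∀ i j,
      (lam i ^ 2 * lam j ^ 2 / (‖x - a i + μ‖ ^ 2 * ‖x - a j + μ‖ ^ 2 * ‖x - a j‖ ^ 2)) •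
        ((x - a i + μ) * star (x - a j + μ) * (x - a j))
      = (lam i ^ 2 / ‖x - a i + μ‖ ^ 2 * (lam j ^ 2 / ‖x - a j‖ ^ 2)) • (x - a j)
        + (μ * lam i ^ 2 * lam j ^ 2 / (‖x - a i + μ‖ ^ 2 * ‖x - a j + μ‖ ^ 2 * ‖x - a j‖ ^ 2)) •
            ((a j - a i) * (x - a j))
        + (lam i ^ 2 / ‖x - a i + μ‖ ^ 2 * (lam j ^ 2 / ‖x - a j + μ‖ ^ 2)) • (a j - a i) := by
    intro i j
    rw [add_coe_mul_star_add_coe_mul (hu_re j) (hu_re i), sub_sub_sub_cancel_left]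
    match_scalars <;> field_simp [hA i, hA j, hB j]
  calc jnrPsi N a lam μ x
      = ∑ i, (lam i ^ 2 / ‖x - a i + μ‖ ^ 2) • jnrZeta N a lam x + jnrXi N a lam μ x
        + ∑ i, ∑ j,
            (lam i ^ 2 / ‖x - a i + μ‖ ^ 2 * (lam j ^ 2 / ‖x - a j + μ‖ ^ 2)) • (a j - a i) := by
        simp only [jnrPsi, jnrXi, jnrZeta, hterm, Finset.sum_add_distrib, Finset.smul_sum,
          mul_smul]
    _ = jnrXi N a lam μ x := by
        rw [hzero, Finset.sum_sum_mul_smul_sub_eq_zero]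
        simp

end JNR

theorem jnr_det_deriv_iota_general (N : ℕ)
    (a : Fin (N + 1) → Quaternion ℝ) (ha_im : ∀ i, (a i).re = 0)
    (lam : Fin (N + 1) → ℝ)
    (μ : ℝ)
    (xs : Fin 3 → ℝ) (hxs : ∀ i, quatOfVec xs ≠ a i)
    (hzero : jnrZeta N a lam (quatOfVec xs) = 0) :
    LinearMap.det
        ((fderiv ℝ (jnrIota N a lam μ) xs : (Fin 3 → ℝ) →L[ℝ] (Fin 3 → ℝ)) :
          (Fin 3 → ℝ) →ₗ[ℝ] (Fin 3 → ℝ))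
      = -LinearMap.det
            ((fderiv ℝ (jnrZetaVec N a lam) xs : (Fin 3 → ℝ) →L[ℝ] (Fin 3 → ℝ)) :
              (Fin 3 → ℝ) →ₗ[ℝ] (Fin 3 → ℝ)) *
          ((jnrXi N a lam μ (quatOfVec xs)).re *
            ((jnrXi N a lam μ (quatOfVec xs)).re ^ 2 +
              ‖(jnrXi N a lam μ (quatOfVec xs)).im‖ ^ 2)) := by
  have hu : ∀ i, quatOfVec xs - a i ≠ 0 := fun i => sub_ne_zero.2 (hxs i)
  have hu_re : ∀ i, (quatOfVec xs - a i).re = 0 := fun i => by simp [ha_im]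
  have hZ : DifferentiableAt ℝ (jnrZeta N a lam ∘ quatOfVecL) xs :=
    (differentiableAt_jnrZeta hxs).comp xs quatOfVecL.differentiableAt
  have hg : DifferentiableAt ℝ (jnrZetaVec N a lam) xs := imVecL.differentiableAt.comp xs hZ
  have hP : DifferentiableAt ℝ (jnrPsi N a lam μ ∘ quatOfVecL) xs :=
    (differentiableAt_jnrPsi hxs fun i => add_coe_ne_zero (hu_re i) (hu i) μ).comp xs
      quatOfVecL.differentiableAt
  have hstar : HasFDerivAt (fun y => star (jnrZeta N a lam (quatOfVec y)))
      (-(quatOfVecL ∘L fderiv ℝ (jnrZetaVec N a lam) xs)) xs := by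
    simp_rw [jnrZeta_quatOfVec ha_im, star_eq_neg.2 (re_quatOfVec _)]
    exact (quatOfVecL.hasFDerivAt.comp xs hg.hasFDerivAt).neg
  have hι : HasFDerivAt (jnrIota N a lam μ)
      (imMulConjL (jnrPsi N a lam μ (quatOfVec xs)) ∘L fderiv ℝ (jnrZetaVec N a lam) xs) xs := by
    refine (imVecL.hasFDerivAt.comp xs (hP.hasFDerivAt_mul_of_eq_zero hstar ?_)).congr_fderiv ?_
    · simpa using hzero
    · ext v : 1
      simp [imMulConjL]
  rw [hι.fderiv, ContinuousLinearMap.toLinearMap_comp, LinearMap.det_comp, det_imMulConjL,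
    jnrPsi_eq_jnrXi ha_im (re_quatOfVec xs) hxs hzero]
  ring

/-- For distinct pure imaginary poles `aᵢ`, weights `λᵢ > 0`, `μ > 0`,
and a zero `x⁎` of `ζ` away from the poles, the determinant of the total derivative of
`ι̃` at `x⁎` equals `−det(Hf(x⁎))·Re(Ξ(μ)(x⁎))·(Re(Ξ(μ)(x⁎))² + ‖Im(Ξ(μ)(x⁎))‖²)`,
where the Hessian `Hf(x⁎)` of `f(x) = Σᵢ λᵢ² log‖x − aᵢ‖` is the derivative of `ζ`
at `x⁎`. -/
theorem jnr_det_deriv_iota (N : ℕ)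
    (a : Fin (N + 1) → Quaternion ℝ) (ha_im : ∀ i, (a i).re = 0)
    (ha : Function.Injective a)
    (lam : Fin (N + 1) → ℝ) (hlam : ∀ i, 0 < lam i)
    (μ : ℝ) (hμ : 0 < μ)
    (xs : Fin 3 → ℝ) (hxs : ∀ i, quatOfVec xs ≠ a i)
    (hzero : jnrZeta N a lam (quatOfVec xs) = 0) :
    LinearMap.det
        ((fderiv ℝ (jnrIota N a lam μ) xs : (Fin 3 → ℝ) →L[ℝ] (Fin 3 → ℝ)) :
          (Fin 3 → ℝ) →ₗ[ℝ] (Fin 3 → ℝ))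
      = -LinearMap.det
            ((fderiv ℝ (jnrZetaVec N a lam) xs : (Fin 3 → ℝ) →L[ℝ] (Fin 3 → ℝ)) :
              (Fin 3 → ℝ) →ₗ[ℝ] (Fin 3 → ℝ)) *
          ((jnrXi N a lam μ (quatOfVec xs)).re *
            ((jnrXi N a lam μ (quatOfVec xs)).re ^ 2 +
              ‖(jnrXi N a lam μ (quatOfVec xs)).im‖ ^ 2)) :=
  jnr_det_deriv_iota_general N a ha_im lam μ xs hxs hzero
end

section
/- (Twisted line scattering degeneracy.) For λ > 0 and γ ≥ 0 consider the N = 3 JNR data with equal unit weights and poles a₀ = λ(1,1,γ), a₁ = λ(1,−1,−γ), a₂ = λ(−1,1,−γ), a₃ = λ(−1,−1,γ), and let f(x) = Σᵢ₌₀³ log‖x − aᵢ‖. Then the origin is a critical point of f, the Hessian of f at the origin equals (4/(λ²(2+γ²)²))·diag(γ², γ², 2 − γ²), and this Hessian is degenerate (has zero determinant) if and only if γ = 0 or γ = √2. -/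
/-- The point `(p, q, r)` of `ℝ³` as an element of `EuclideanSpace ℝ (Fin 3)`. -/
noncomputable def pt (p q r : ℝ) : EuclideanSpace ℝ (Fin 3) :=
  (WithLp.equiv 2 (Fin 3 → ℝ)).symm ![p, q, r]

/-- The twisted-line-scattering `N = 3` JNR poles `λ(±1, ±1, ±γ)`. -/
noncomputable def tlsPoles (lam γ : ℝ) : Fin 4 → EuclideanSpace ℝ (Fin 3) :=
  ![lam • pt 1 1 γ, lam • pt 1 (-1) (-γ), lam • pt (-1) 1 (-γ), lam • pt (-1) (-1) γ]

/-- The potential `f(x) = Σᵢ log‖x − aᵢ‖` for the twisted-line-scattering poles (equal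
unit weights). -/
noncomputable def tlsF (lam γ : ℝ) (x : EuclideanSpace ℝ (Fin 3)) : ℝ :=
  ∑ i, Real.log ‖x - tlsPoles lam γ i‖

/-!
All four poles lie on the sphere of radius `r = λ√(2 + γ²)` about the origin and sum to zero, so
`∇f(0) = -r⁻² Σ aᵢ = 0`. Differentiating `∇f(x) = Σ ‖x - aᵢ‖⁻² (x - aᵢ)` gives the Hessian
`v ↦ Σ (‖x - aᵢ‖⁻² v - 2 ‖x - aᵢ‖⁻⁴ ⟪x - aᵢ, v⟫ (x - aᵢ))`, which at the origin is
`4 r⁻² - 2 r⁻⁴ Σ aᵢ aᵢᵀ` with `Σ aᵢ aᵢᵀ = 4λ² diag(1, 1, γ²)`. This is the stated diagonal matrix,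
whose determinant is a nonzero multiple of `γ⁴ (2 - γ²)`.
-/

open Filter Topology
open scoped RealInnerProductSpace

section JNR

variable {E : Type*} [NormedAddCommGroup E] [InnerProductSpace ℝ E]

theorem hasFDerivAt_log_norm_sub {a x : E} (hx : x ≠ a) :
    HasFDerivAt (fun y => Real.log ‖y - a‖) ((‖x - a‖ ^ 2)⁻¹ • innerSL ℝ (x - a)) x := by
  have hsq : ‖x - a‖ ^ 2 ≠ 0 := by simpa [sub_eq_zero] using hx
  have hsub : HasFDerivAt (fun y : E => y - a) (ContinuousLinearMap.id ℝ E) x :=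
    (hasFDerivAt_id x).sub_const a
  have hlog := (hsub.norm_sq.log hsq).const_mul (2⁻¹ : ℝ)
  have hhalf : (fun y : E => 2⁻¹ * Real.log (‖y - a‖ ^ 2)) = fun y => Real.log ‖y - a‖ := by
    funext y
    rw [Real.log_pow]
    push_cast
    ring
  rw [hhalf] at hlog
  refine hlog.congr_fderiv ?_
  ext v
  simp only [ContinuousLinearMap.comp_id, smul_apply, coe_innerSL_apply, nsmul_eq_mul,
    Nat.cast_ofNat, smul_eq_mul]
  ring

theorem hasFDerivAt_inv_norm_sq_smul_sub {a x : E} (hx : x ≠ a) :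
    HasFDerivAt (fun y => (‖y - a‖ ^ 2)⁻¹ • (y - a))
      ((‖x - a‖ ^ 2)⁻¹ • ContinuousLinearMap.id ℝ E -
        (2 / (‖x - a‖ ^ 2) ^ 2) • (innerSL ℝ (x - a)).smulRight (x - a)) x := by
  have hsq : ‖x - a‖ ^ 2 ≠ 0 := by simpa [sub_eq_zero] using hx
  have hsub : HasFDerivAt (fun y : E => y - a) (ContinuousLinearMap.id ℝ E) x :=
    (hasFDerivAt_id x).sub_const a
  have hinv := (hasDerivAt_inv hsq).comp_hasFDerivAt x hsub.norm_sq
  refine (hinv.smul hsub).congr_fderiv ?_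
  ext v
  simp only [Function.comp_apply, ContinuousLinearMap.comp_id, add_apply, sub_apply, smul_apply,
    ContinuousLinearMap.id_apply, ContinuousLinearMap.smulRight_apply, coe_innerSL_apply,
    nsmul_eq_mul, Nat.cast_ofNat, smul_eq_mul]
  module

variable [CompleteSpace E] {ι : Type*} [Fintype ι]

-- The weight `w i` stands for the paper's `λᵢ²`; `jnrGradient` is the paper's `ζ`.
noncomputable def jnrPotential (w : ι → ℝ) (a : ι → E) (x : E) : ℝ :=
  ∑ i, w i * Real.log ‖x - a i‖

noncomputable def jnrGradient (w : ι → ℝ) (a : ι → E) (x : E) : E :=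
  ∑ i, w i • (‖x - a i‖ ^ 2)⁻¹ • (x - a i)

theorem hasGradientAt_jnrPotential (w : ι → ℝ) {a : ι → E} {x : E} (hx : ∀ i, x ≠ a i) :
    HasGradientAt (jnrPotential w a) (jnrGradient w a x) x := by
  rw [hasGradientAt_iff_hasFDerivAt]
  refine (HasFDerivAt.fun_sum (u := Finset.univ) fun i _ =>
    (hasFDerivAt_log_norm_sub (hx i)).const_mul (w i)).congr_fderiv ?_
  ext v
  simp only [jnrGradient, map_sum, map_smul, InnerProductSpace.toDual_apply_apply, sum_apply,
    smul_apply, coe_innerSL_apply, smul_eq_mul]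

theorem gradient_jnrPotential_eventuallyEq (w : ι → ℝ) {a : ι → E} {x : E} (hx : ∀ i, x ≠ a i) :
    gradient (jnrPotential w a) =ᶠ[𝓝 x] jnrGradient w a := by
  filter_upwards [eventually_all.mpr fun i => eventually_ne_nhds (hx i)] with y hy
  exact (hasGradientAt_jnrPotential w hy).gradient

theorem fderiv_gradient_jnrPotential_apply (w : ι → ℝ) {a : ι → E} {x : E}
    (hx : ∀ i, x ≠ a i) (v : E) :
    fderiv ℝ (gradient (jnrPotential w a)) x v =
      ∑ i, w i • ((‖x - a i‖ ^ 2)⁻¹ • v -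
        (2 / (‖x - a i‖ ^ 2) ^ 2 * ⟪x - a i, v⟫) • (x - a i)) := by
  have hζ : HasFDerivAt (jnrGradient w a)
      (∑ i, w i • ((‖x - a i‖ ^ 2)⁻¹ • ContinuousLinearMap.id ℝ E -
        (2 / (‖x - a i‖ ^ 2) ^ 2) • (innerSL ℝ (x - a i)).smulRight (x - a i))) x :=
    HasFDerivAt.fun_sum fun i _ => (hasFDerivAt_inv_norm_sq_smul_sub (hx i)).const_smul (w i)
  rw [(gradient_jnrPotential_eventuallyEq w hx).fderiv_eq, hζ.fderiv]
  simp only [sum_apply, smul_apply, sub_apply, ContinuousLinearMap.id_apply,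
    ContinuousLinearMap.smulRight_apply, coe_innerSL_apply, smul_smul]

end JNR

theorem LinearMap.det_eq_prod_of_apply_eq_mul {𝕜 n : Type*} [RCLike 𝕜] [Fintype n]
    [DecidableEq n]
    (T : EuclideanSpace 𝕜 n →ₗ[𝕜] EuclideanSpace 𝕜 n) (c : n → 𝕜)
    (hT : ∀ v i, T v i = c i * v i) : LinearMap.det T = ∏ i, c i := by
  rw [← LinearMap.det_toMatrix (EuclideanSpace.basisFun n 𝕜).toBasis, ← Matrix.det_diagonal]
  congr 1
  ext i j
  simp [LinearMap.toMatrix_apply, hT, Matrix.diagonal_apply, PiLp.single_apply]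

theorem sq_mul_sq_mul_two_sub_sq_eq_zero_iff {γ : ℝ} (hγ : 0 ≤ γ) :
    γ ^ 2 * γ ^ 2 * (2 - γ ^ 2) = 0 ↔ γ = 0 ∨ γ = √2 := by
  rw [mul_eq_zero, mul_eq_zero, or_self, pow_eq_zero_iff two_ne_zero, sub_eq_zero,
    ← Real.sqrt_eq_iff_eq_sq zero_le_two hγ, eq_comm (a := √2)]

section TwistedLineScattering

local notation "ℝ³" => EuclideanSpace ℝ (Fin 3)

variable {lam : ℝ} (γ : ℝ)

theorem tlsF_eq_jnrPotential : tlsF lam γ = jnrPotential 1 (tlsPoles lam γ) := by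
  funext x
  simp [tlsF, jnrPotential]

theorem norm_tlsPoles_sq (j : Fin 4) : ‖tlsPoles lam γ j‖ ^ 2 = lam ^ 2 * (2 + γ ^ 2) := by
  fin_cases j <;> simp [EuclideanSpace.real_norm_sq_eq, Fin.sum_univ_three, tlsPoles, pt] <;> ring

theorem tlsPoles_ne_zero (hlam : lam ≠ 0) (j : Fin 4) : tlsPoles lam γ j ≠ 0 := by
  rw [← norm_ne_zero_iff, ← pow_ne_zero_iff two_ne_zero, norm_tlsPoles_sq]
  positivity

theorem sum_tlsPoles : ∑ j, tlsPoles lam γ j = 0 := by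
  ext i
  fin_cases i <;> simp [Fin.sum_univ_four, tlsPoles, pt]

theorem sum_inner_smul_tlsPoles (v : ℝ³) :
    ∑ j, ⟪tlsPoles lam γ j, v⟫ • tlsPoles lam γ j =
      (4 * lam ^ 2) • pt (v 0) (v 1) (γ ^ 2 * v 2) := by
  ext i
  fin_cases i <;>
    simp [Fin.sum_univ_four, Fin.sum_univ_three, tlsPoles, pt, PiLp.inner_apply] <;> ring

theorem gradient_tlsF_zero (hlam : lam ≠ 0) : gradient (tlsF lam γ) 0 = 0 := by
  rw [tlsF_eq_jnrPotential,
    (hasGradientAt_jnrPotential 1 fun j => (tlsPoles_ne_zero γ hlam j).symm).gradient]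
  simp only [jnrGradient, zero_sub, norm_neg, norm_tlsPoles_sq, Pi.one_apply, one_smul]
  rw [← Finset.smul_sum, Finset.sum_neg_distrib, sum_tlsPoles, neg_zero, smul_zero]

theorem fderiv_gradient_tlsF_zero_apply (hlam : lam ≠ 0) (v : ℝ³) (i : Fin 3) :
    fderiv ℝ (gradient (tlsF lam γ)) 0 v i =
      4 / (lam ^ 2 * (2 + γ ^ 2) ^ 2) * ![γ ^ 2, γ ^ 2, 2 - γ ^ 2] i * v i := by
  rw [tlsF_eq_jnrPotential,
    fderiv_gradient_jnrPotential_apply 1 fun j => (tlsPoles_ne_zero γ hlam j).symm]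
  simp only [zero_sub, norm_neg, norm_tlsPoles_sq, Pi.one_apply, one_smul, inner_neg_left,
    mul_neg, neg_smul_neg, Finset.sum_sub_distrib, mul_smul]
  rw [← Finset.smul_sum, ← Finset.smul_sum, sum_inner_smul_tlsPoles, Finset.sum_const,
    Finset.card_univ, Fintype.card_fin]
  fin_cases i <;>
    simp only [pt, Fin.isValue, WithLp.equiv_symm_apply, Fin.zero_eta, Fin.mk_one, Fin.reduceFinMk,
      PiLp.sub_apply, PiLp.smul_apply, nsmul_eq_mul, Nat.cast_ofNat, smul_eq_mul, Matrix.cons_val_zero,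
      Matrix.cons_val_one, Matrix.cons_val] <;>
    field_simp <;> ring

end TwistedLineScattering

/-- (Twisted line scattering degeneracy.) For `λ > 0` and `γ ≥ 0`,
with poles `a₀ = λ(1,1,γ)`, `a₁ = λ(1,−1,−γ)`, `a₂ = λ(−1,1,−γ)`, `a₃ = λ(−1,−1,γ)` and
`f(x) = Σᵢ log‖x − aᵢ‖`: the origin is a critical point of `f`, the Hessian of `f` at
the origin (the derivative of `∇f` at `0`) equals
`(4/(λ²(2+γ²)²))·diag(γ², γ², 2 − γ²)`, and this Hessian is degenerate (zero
determinant) iff `γ = 0` or `γ = √2`. -/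
theorem jnr_twisted_line_scattering_hessian (lam γ : ℝ) (hlam : 0 < lam) (hγ : 0 ≤ γ) :
    gradient (tlsF lam γ) 0 = 0
      ∧ (∀ v : EuclideanSpace ℝ (Fin 3), ∀ i : Fin 3,
          fderiv ℝ (fun y => gradient (tlsF lam γ) y) 0 v i
            = 4 / (lam ^ 2 * (2 + γ ^ 2) ^ 2) * (![γ ^ 2, γ ^ 2, 2 - γ ^ 2] i) * v i)
      ∧ (LinearMap.det
            ((fderiv ℝ (fun y => gradient (tlsF lam γ) y) 0 :
                EuclideanSpace ℝ (Fin 3) →L[ℝ] EuclideanSpace ℝ (Fin 3)) :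
              EuclideanSpace ℝ (Fin 3) →ₗ[ℝ] EuclideanSpace ℝ (Fin 3)) = 0
          ↔ γ = 0 ∨ γ = Real.sqrt 2) := by
  have hhess := fderiv_gradient_tlsF_zero_apply γ hlam.ne'
  refine ⟨gradient_tlsF_zero γ hlam.ne', hhess, ?_⟩
  have hscale : 4 / (lam ^ 2 * (2 + γ ^ 2) ^ 2) ≠ 0 := by positivity
  rw [LinearMap.det_eq_prod_of_apply_eq_mul _ _ hhess, Fin.prod_univ_three,
    ← sq_mul_sq_mul_two_sub_sq_eq_zero_iff hγ]
  simp [hscale]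
end
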